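/- Let $(\Omega, \Pr)$ be a finite probability space, let $X : \Omega \to \{y_1,\dots,y_k\}$ be a random variable, let $A, B, C \subseteq \Omega$ be events with positive probability, and let $(a,b,c)$ be a representable triple. Then there exists a value $y$ with $\Pr[X = y] > 0$ and a representable triple $(a',b',c')$ such that $a' \geq \frac{\Pr[A \mid X=y]}{\Pr[A]} \cdot a$, $b' \geq \frac{\Pr[B \mid X=y]}{\Pr[B]} \cdot b$, and $c' \geq \frac{\Pr[C \mid X=y]}{\Pr[C]} \cdot c$. -/

import Mathlib

/-!
A triple `(a, b, c) ≥ 0` is representable iff `a + b + c + √(abc) ≤ 4`: representability is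
monotone, and the triples with `a1 + b1 = a2 + c2 = b3 + c3 = 2` sweep out the surface
`a + b + c + √(abc) = 4`. The region `a + b + c + √(abc) > 4` of the orthant is convex, since at
each point `(p², q², r²)` of the surface (`p² + q² + r² + pqr = 4`) it lies strictly beyond the
tangent plane. The triples `(Pr[A | X = y] / Pr[A] · a, …)` average to `(a, b, c)` with weights
`Pr[X = y]`, so they cannot all lie in that region.
-/

open Finset

def Representable (a b c : ℝ) : Prop :=
  ∃ a1 a2 b1 b3 c2 c3 : ℝ,
    a1 ∈ Set.Icc (0:ℝ) 2 ∧ a2 ∈ Set.Icc (0:ℝ) 2 ∧ b1 ∈ Set.Icc (0:ℝ) 2 ∧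
    b3 ∈ Set.Icc (0:ℝ) 2 ∧ c2 ∈ Set.Icc (0:ℝ) 2 ∧ c3 ∈ Set.Icc (0:ℝ) 2 ∧
    a1 * a2 = a ∧ b1 * b3 = b ∧ c2 * c3 = c ∧
    a1 + b1 ≤ 2 ∧ a2 + c2 ≤ 2 ∧ b3 + c3 ≤ 2

noncomputable def repGauge (a b c : ℝ) : ℝ := a + b + c + √(a * b * c)

lemma repGauge_rotate (a b c : ℝ) : repGauge a b c = repGauge b c a := by
  simp only [repGauge]; ring_nf

lemma repGauge_le_repGauge {a b c a' b' c' : ℝ} (ha : 0 ≤ a) (hb : 0 ≤ b) (hc : 0 ≤ c)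
    (ha' : a ≤ a') (hb' : b ≤ b') (hc' : c ≤ c') : repGauge a b c ≤ repGauge a' b' c' := by
  have := ha.trans ha'
  have := hb.trans hb'
  unfold repGauge
  gcongr

lemma repGauge_le_four_iff {a b c : ℝ} :
    repGauge a b c ≤ 4 ↔ 0 ≤ 4 - a - b - c ∧ a * b * c ≤ (4 - a - b - c) ^ 2 := by
  rw [repGauge, ← Real.sqrt_le_iff]
  constructor <;> intro h <;> linarith

/-- The triples `(xy, (2-x)t, (2-y)(2-t))` are the representable ones with `a1 + b1 = a2 + c2 =
b3 + c3 = 2`; for them `(4-a-b-c)² - abc` is the square of `(4-a)(t-1) - b + c`. -/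
lemma repGauge_mul_le_four {x y t : ℝ} (hx : x ∈ Set.Icc (0:ℝ) 2) (hy : y ∈ Set.Icc (0:ℝ) 2)
    (ht : t ∈ Set.Icc (0:ℝ) 2) : repGauge (x * y) ((2 - x) * t) ((2 - y) * (2 - t)) ≤ 4 := by
  obtain ⟨hx0, hx2⟩ := hx
  obtain ⟨hy0, hy2⟩ := hy
  obtain ⟨ht0, ht2⟩ := ht
  rw [repGauge_le_four_iff]
  constructor
  · nlinarith [mul_nonneg (mul_nonneg (sub_nonneg.2 hy2) hx0) ht0,
      mul_nonneg (mul_nonneg hy0 (sub_nonneg.2 hx2)) (sub_nonneg.2 ht2)]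
  · nlinarith [sq_nonneg ((4 - x * y) * (t - 1) - (2 - x) * t + (2 - y) * (2 - t))]

lemma Representable.of_le_left {a a' b c : ℝ} (h : Representable a b c) (ha' : 0 ≤ a')
    (haa' : a' ≤ a) : Representable a' b c := by
  obtain ⟨a1, a2, b1, b3, c2, c3, ha1, ⟨ha20, ha22⟩, hb1, hb3, hc2, hc3,
    rfl, hb, hc, hab, hac, hbc⟩ := h
  have hr0 : 0 ≤ a' / (a1 * a2) := div_nonneg ha' (ha'.trans haa')
  have hr1 : a' / (a1 * a2) ≤ 1 := div_le_one_of_le₀ haa' (ha'.trans haa')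
  have hle : a2 * (a' / (a1 * a2)) ≤ a2 := mul_le_of_le_one_right ha20 hr1
  refine ⟨a1, a2 * (a' / (a1 * a2)), b1, b3, c2, c3, ha1, ⟨by positivity, by linarith⟩, hb1,
    hb3, hc2, hc3, ?_, hb, hc, hab, by linarith, hbc⟩
  rw [← mul_assoc]
  exact mul_div_cancel_of_imp' fun h0 => le_antisymm (h0 ▸ haa') ha'

lemma representable_boundary {b c t : ℝ} (hb : 0 ≤ b) (hc : 0 ≤ c) (ht0 : 0 ≤ t) (ht2 : t ≤ 2)
    (hbt : b ≤ 2 * t) (hct : c ≤ 2 * (2 - t)) :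
    Representable ((2 - b / t) * (2 - c / (2 - t))) b c := by
  have hbt' : b / t ≤ 2 := div_le_of_le_mul₀ ht0 zero_le_two hbt
  have hct' : c / (2 - t) ≤ 2 := div_le_of_le_mul₀ (by linarith) zero_le_two hct
  have hbt0 : 0 ≤ b / t := div_nonneg hb ht0
  have hct0 : 0 ≤ c / (2 - t) := div_nonneg hc (by linarith)
  refine ⟨2 - b / t, 2 - c / (2 - t), b / t, t, c / (2 - t), 2 - t, ⟨by linarith, by linarith⟩,
    ⟨by linarith, by linarith⟩, ⟨hbt0, hbt'⟩, ⟨ht0, ht2⟩, ⟨hct0, hct'⟩, ⟨by linarith, by linarith⟩,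
    rfl, ?_, ?_, by linarith, by linarith, by linarith⟩
  · exact div_mul_cancel_of_imp fun h0 => by linarith
  · exact div_mul_cancel_of_imp fun h0 => by linarith

lemma representable_of_mul_le {a b c t : ℝ} (ha : 0 ≤ a) (hb : 0 ≤ b) (hc : 0 ≤ c)
    (habc : a + b + c ≤ 4) (ht0 : 0 ≤ t) (ht2 : t ≤ 2) (hbt : b ≤ 2 * t)
    (hct : c ≤ 2 * (2 - t)) (h : a * (t * (2 - t)) ≤ (2 * t - b) * (2 * (2 - t) - c)) :
    Representable a b c := by
  refine (representable_boundary hb hc ht0 ht2 hbt hct).of_le_left ha ?_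
  rcases ht0.eq_or_lt with rfl | ht0
  · simp only [div_zero, sub_zero]; linarith
  rcases ht2.eq_or_lt with rfl | ht2
  · simp only [sub_self, div_zero, sub_zero]; linarith
  have h2t : 0 < 2 - t := by linarith
  rw [show 2 - b / t = (2 * t - b) / t by field_simp,
    show 2 - c / (2 - t) = (2 * (2 - t) - c) / (2 - t) by field_simp, div_mul_div_comm,
    le_div_iff₀ (by positivity)]
  exact h

lemma representable_of_repGauge_le_four {a b c : ℝ} (ha : 0 ≤ a) (hb : 0 ≤ b) (hc : 0 ≤ c)
    (h : repGauge a b c ≤ 4) : Representable a b c := by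
  obtain ⟨hS, habc⟩ := repGauge_le_four_iff.1 h
  rcases (show a ≤ 4 by linarith).eq_or_lt with rfl | ha4
  · exact representable_of_mul_le ha hb hc (by linarith) zero_le_one one_le_two
      (by linarith) (by linarith) (by nlinarith)
  -- this `t` makes the square in `repGauge_mul_le_four` vanish
  set t := (4 - a + b - c) / (4 - a)
  have ht : (4 - a) * t = 4 - a + b - c := mul_div_cancel₀ _ (by linarith)
  have hbt : b ≤ 2 * t := by nlinarith [mul_nonneg ha hb]
  have hct : c ≤ 2 * (2 - t) := by nlinarith [mul_nonneg ha hc]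
  have key : (4 - a) ^ 2 * ((2 * t - b) * (2 * (2 - t) - c) - a * (t * (2 - t))) =
      (4 - a) * ((4 - a - b - c) ^ 2 - a * b * c) := by
    linear_combination (-(4 - a) * ((4 - a) * t - (4 - a + b - c))) * ht
  refine representable_of_mul_le ha hb hc (by linarith) (by linarith) (by linarith) hbt hct ?_
  have hprod : 0 ≤ (4 - a) ^ 2 * ((2 * t - b) * (2 * (2 - t) - c) - a * (t * (2 - t))) :=
    key ▸ mul_nonneg (by linarith) (by linarith)
  linarith [nonneg_of_mul_nonneg_right hprod (by positivity)]

theorem representable_iff {a b c : ℝ} :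
    Representable a b c ↔ 0 ≤ a ∧ 0 ≤ b ∧ 0 ≤ c ∧ repGauge a b c ≤ 4 := by
  refine ⟨fun h => ?_, fun ⟨ha, hb, hc, h⟩ => representable_of_repGauge_le_four ha hb hc h⟩
  obtain ⟨a1, a2, b1, b3, c2, c3, ha1, ha2, ⟨hb1, -⟩, hb3, ⟨hc2, -⟩, ⟨hc3, -⟩,
    rfl, rfl, rfl, hab, hac, hbc⟩ := h
  have ha : 0 ≤ a1 * a2 := mul_nonneg ha1.1 ha2.1
  have hb : 0 ≤ b1 * b3 := mul_nonneg hb1 hb3.1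
  have hc : 0 ≤ c2 * c3 := mul_nonneg hc2 hc3
  refine ⟨ha, hb, hc, (repGauge_le_repGauge ha hb hc le_rfl ?_ ?_).trans
    (repGauge_mul_le_four ha1 ha2 hb3)⟩
  · exact mul_le_mul_of_nonneg_right (by linarith) hb3.1
  · exact mul_le_mul (by linarith) (by linarith) hc3 (by linarith [ha2.2])

lemma one_add_two_mul_le_sq_add_sq_add_sq {x y z : ℝ} (hy0 : 0 ≤ y) (hy : y ≤ 1) (hz : 1 ≤ z) :
    1 + 2 * x * y * z ≤ x ^ 2 + y ^ 2 + z ^ 2 := by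
  nlinarith [sq_nonneg (x - y * z), mul_nonneg (by nlinarith : 0 ≤ 1 - y ^ 2)
    (by nlinarith : 0 ≤ z ^ 2 - 1)]

lemma eight_add_mul_lt_of_four_lt {p q r x y z : ℝ} (hp : 0 < p) (hq : 0 < q) (hr : 0 < r)
    (h₀ : p ^ 2 + q ^ 2 + r ^ 2 + p * q * r = 4) (hx : 0 ≤ x) (hy : 0 ≤ y) (hz : 0 ≤ z)
    (h : 4 < (p * x) ^ 2 + (q * y) ^ 2 + (r * z) ^ 2 + (p * x) * (q * y) * (r * z)) :
    8 + p * q * r < (2 * p ^ 2 + p * q * r) * x ^ 2 + (2 * q ^ 2 + p * q * r) * y ^ 2 +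
      (2 * r ^ 2 + p * q * r) * z ^ 2 := by
  have he : 0 < p * q * r := by positivity
  have hcases : 1 + 2 * x * y * z ≤ x ^ 2 + y ^ 2 + z ^ 2 ∨ (1 ≤ x ∧ 1 ≤ y ∧ 1 ≤ z) := by
    rcases le_or_gt 1 x with hx1 | hx1 <;> rcases le_or_gt 1 y with hy1 | hy1
    · rcases le_or_gt 1 z with hz1 | hz1
      · exact .inr ⟨hx1, hy1, hz1⟩
      · exact .inl (by linarith [one_add_two_mul_le_sq_add_sq_add_sq (x := y) hz hz1.le hx1])
    · exact .inl (by linarith [one_add_two_mul_le_sq_add_sq_add_sq (x := z) hy hy1.le hx1])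
    · exact .inl (by linarith [one_add_two_mul_le_sq_add_sq_add_sq (x := z) hx hx1.le hy1])
    · rcases le_or_gt 1 z with hz1 | hz1
      · exact .inl (by linarith [one_add_two_mul_le_sq_add_sq_add_sq (x := y) hx hx1.le hz1])
      · exfalso
        nlinarith [
          mul_le_mul_of_nonneg_left (mul_le_mul hx1.le hx1.le hx zero_le_one) (sq_nonneg p),
          mul_le_mul_of_nonneg_left (mul_le_mul hy1.le hy1.le hy zero_le_one) (sq_nonneg q),
          mul_le_mul_of_nonneg_left (mul_le_mul hz1.le hz1.le hz zero_le_one) (sq_nonneg r),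
          mul_le_mul_of_nonneg_left (mul_le_mul (mul_le_mul hx1.le hy1.le hy zero_le_one)
            hz1.le hz (by norm_num)) he.le]
  rcases hcases with hQ | ⟨hx1, hy1, hz1⟩
  -- the difference of the two sides is `2 (h.rhs - 4) + pqr (x² + y² + z² - 2xyz - 1)`
  · nlinarith [mul_nonneg he.le (sub_nonneg.2 hQ)]
  · have h3 : 3 < x + y + z := by
      by_contra! h3
      obtain rfl : x = 1 := by linarith
      obtain rfl : y = 1 := by linarith
      obtain rfl : z = 1 := by linarith
      linarith
    nlinarith [mul_nonneg (sq_nonneg p) (by nlinarith : 0 ≤ x ^ 2 - 1),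
      mul_nonneg (sq_nonneg q) (by nlinarith : 0 ≤ y ^ 2 - 1),
      mul_nonneg (sq_nonneg r) (by nlinarith : 0 ≤ z ^ 2 - 1),
      mul_nonneg he.le (mul_nonneg hx (sub_nonneg.2 hx1)),
      mul_nonneg he.le (mul_nonneg hy (sub_nonneg.2 hy1)),
      mul_nonneg he.le (mul_nonneg hz (sub_nonneg.2 hz1)), mul_pos he (sub_pos.2 h3)]

lemma repGauge_sq {p q r : ℝ} (hp : 0 ≤ p) (hq : 0 ≤ q) (hr : 0 ≤ r) :
    repGauge (p ^ 2) (q ^ 2) (r ^ 2) = p ^ 2 + q ^ 2 + r ^ 2 + p * q * r := by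
  rw [repGauge, show p ^ 2 * q ^ 2 * r ^ 2 = (p * q * r) ^ 2 by ring,
    Real.sqrt_sq (by positivity)]

/-- Twice the differential of `repGauge` at `(x₀, y₀, z₀)`, evaluated at `(x, y, z)`. -/
noncomputable def tangentForm (x₀ y₀ z₀ x y z : ℝ) : ℝ :=
  (2 + √(x₀ * y₀ * z₀) / x₀) * x + (2 + √(x₀ * y₀ * z₀) / y₀) * y +
    (2 + √(x₀ * y₀ * z₀) / z₀) * z

lemma tangentForm_mul (x₀ y₀ z₀ τ x y z : ℝ) :
    tangentForm x₀ y₀ z₀ (τ * x) (τ * y) (τ * z) = τ * tangentForm x₀ y₀ z₀ x y z := by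
  simp only [tangentForm]; ring

lemma sum_mul_tangentForm {ι : Type*} (s : Finset ι) (P u v w : ι → ℝ) (x₀ y₀ z₀ : ℝ) :
    ∑ i ∈ s, P i * tangentForm x₀ y₀ z₀ (u i) (v i) (w i) =
      tangentForm x₀ y₀ z₀ (∑ i ∈ s, P i * u i) (∑ i ∈ s, P i * v i) (∑ i ∈ s, P i * w i) := by
  simp only [tangentForm, mul_sum, ← sum_add_distrib]
  exact sum_congr rfl fun i _ => by ring

lemma tangentForm_lt_of_four_lt {x₀ y₀ z₀ x y z : ℝ} (hx₀ : 0 < x₀) (hy₀ : 0 < y₀)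
    (hz₀ : 0 < z₀) (h₀ : repGauge x₀ y₀ z₀ = 4) (hx : 0 ≤ x) (hy : 0 ≤ y) (hz : 0 ≤ z)
    (h : 4 < repGauge x y z) : tangentForm x₀ y₀ z₀ x₀ y₀ z₀ < tangentForm x₀ y₀ z₀ x y z := by
  have hsq : ∀ {t₀ : ℝ}, 0 < t₀ → ∃ p, 0 < p ∧ p ^ 2 = t₀ :=
    fun {t₀} ht₀ => ⟨√t₀, Real.sqrt_pos.2 ht₀, Real.sq_sqrt ht₀.le⟩
  have hscaled : ∀ {p t : ℝ}, 0 < p → 0 ≤ t → ∃ X, 0 ≤ X ∧ (p * X) ^ 2 = t :=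
    fun {p t} hp ht => ⟨√t / p, by positivity, by rw [mul_div_cancel₀ _ hp.ne', Real.sq_sqrt ht]⟩
  obtain ⟨p, hp, rfl⟩ := hsq hx₀
  obtain ⟨q, hq, rfl⟩ := hsq hy₀
  obtain ⟨r, hr, rfl⟩ := hsq hz₀
  obtain ⟨X, hX, rfl⟩ := hscaled hp hx
  obtain ⟨Y, hY, rfl⟩ := hscaled hq hy
  obtain ⟨Z, hZ, rfl⟩ := hscaled hr hz
  rw [repGauge_sq hp.le hq.le hr.le] at h₀
  rw [repGauge_sq (by positivity) (by positivity) (by positivity)] at h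
  have key := eight_add_mul_lt_of_four_lt hp hq hr h₀ hX hY hZ h
  rw [tangentForm, tangentForm, show p ^ 2 * q ^ 2 * r ^ 2 = (p * q * r) ^ 2 by ring,
    Real.sqrt_sq (by positivity)]
  calc _ = 8 + p * q * r := by field_simp; linear_combination 2 * h₀
    _ < _ := key
    _ = _ := by field_simp

lemma exists_one_le_repGauge_mul_eq_four {a b c : ℝ} (ha : 0 < a) (hb : 0 < b) (hc : 0 < c)
    (h : repGauge a b c ≤ 4) : ∃ τ, 1 ≤ τ ∧ repGauge (τ * a) (τ * b) (τ * c) = 4 := by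
  have hS : 0 < a + b + c := by positivity
  have hle : ∀ τ, τ * (a + b + c) ≤ repGauge (τ * a) (τ * b) (τ * c) := fun τ => by
    rw [repGauge]; linarith [Real.sqrt_nonneg (τ * a * (τ * b) * (τ * c))]
  have h1 : 1 ≤ 4 / (a + b + c) := (one_le_div hS).2 (by linarith [repGauge_le_four_iff.1 h])
  have hcont : ContinuousOn (fun τ => repGauge (τ * a) (τ * b) (τ * c))
      (Set.Icc 1 (4 / (a + b + c))) := by
    unfold repGauge; fun_prop
  obtain ⟨τ, hτ, hτ4⟩ := intermediate_value_Icc h1 hcont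
    ⟨by simpa only [one_mul] using h,
      by simpa [div_mul_cancel₀ _ hS.ne'] using hle (4 / (a + b + c))⟩
  exact ⟨τ, hτ.1, hτ4⟩

section Incurved

variable {ι : Type*} {s : Finset ι} {P u v w : ι → ℝ}

lemma four_lt_repGauge_of_sum_eq {a b c : ℝ} (hP : ∀ i ∈ s, 0 < P i)
    (hPs : ∑ i ∈ s, P i = 1) (hu : ∀ i ∈ s, 0 ≤ u i) (hv : ∀ i ∈ s, 0 ≤ v i)
    (hw : ∀ i ∈ s, 0 ≤ w i) (hua : ∑ i ∈ s, P i * u i = a) (hvb : ∑ i ∈ s, P i * v i = b)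
    (hwc : ∑ i ∈ s, P i * w i = c) (ha : 0 < a) (hb : 0 < b) (hc : 0 < c)
    (hN : ∀ i ∈ s, 4 < repGauge (u i) (v i) (w i)) : 4 < repGauge a b c := by
  by_contra! h
  obtain ⟨τ, hτ, hτ4⟩ := exists_one_le_repGauge_mul_eq_four ha hb hc h
  have hne : s.Nonempty := nonempty_of_sum_ne_zero (by rw [hPs]; exact one_ne_zero)
  have hlt := sum_lt_sum_of_nonempty hne fun i hi => mul_lt_mul_of_pos_left
    (tangentForm_lt_of_four_lt (by positivity) (by positivity) (by positivity) hτ4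
      (hu i hi) (hv i hi) (hw i hi) (hN i hi)) (hP i hi)
  rw [← sum_mul, hPs, one_mul, sum_mul_tangentForm, hua, hvb, hwc, tangentForm_mul] at hlt
  have hpos : 0 < tangentForm (τ * a) (τ * b) (τ * c) a b c := by
    unfold tangentForm; positivity
  nlinarith

lemma four_lt_repGauge_sum_of_eq_zero (hP : ∀ i ∈ s, 0 < P i) (hPs : ∑ i ∈ s, P i = 1)
    (hu : ∀ i ∈ s, 0 ≤ u i) (hN : ∀ i ∈ s, 4 < repGauge (u i) (v i) (w i))
    (h0 : ∑ i ∈ s, P i * u i = 0) :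
    4 < repGauge (∑ i ∈ s, P i * u i) (∑ i ∈ s, P i * v i) (∑ i ∈ s, P i * w i) := by
  have hu0 : ∀ i ∈ s, u i = 0 := fun i hi =>
    (mul_eq_zero.1 ((sum_eq_zero_iff_of_nonneg fun j hj => mul_nonneg (hP j hj).le (hu j hj)).1
      h0 i hi)).resolve_left (hP i hi).ne'
  have hne : s.Nonempty := nonempty_of_sum_ne_zero (by rw [hPs]; exact one_ne_zero)
  rw [h0]
  simp only [repGauge, zero_add, zero_mul, Real.sqrt_zero, add_zero]
  calc (4 : ℝ) = ∑ i ∈ s, P i * 4 := by rw [← sum_mul, hPs, one_mul]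
    _ < ∑ i ∈ s, P i * (v i + w i) := sum_lt_sum_of_nonempty hne fun i hi =>
        mul_lt_mul_of_pos_left (by simpa [repGauge, hu0 i hi] using hN i hi) (hP i hi)
    _ = _ := by simp only [mul_add, sum_add_distrib]

theorem four_lt_repGauge_sum (hP : ∀ i ∈ s, 0 < P i) (hPs : ∑ i ∈ s, P i = 1)
    (hu : ∀ i ∈ s, 0 ≤ u i) (hv : ∀ i ∈ s, 0 ≤ v i) (hw : ∀ i ∈ s, 0 ≤ w i)
    (hN : ∀ i ∈ s, 4 < repGauge (u i) (v i) (w i)) :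
    4 < repGauge (∑ i ∈ s, P i * u i) (∑ i ∈ s, P i * v i) (∑ i ∈ s, P i * w i) := by
  have hmean : ∀ f : ι → ℝ, (∀ i ∈ s, 0 ≤ f i) → 0 ≤ ∑ i ∈ s, P i * f i :=
    fun f hf => sum_nonneg fun i hi => mul_nonneg (hP i hi).le (hf i hi)
  rcases (hmean u hu).eq_or_lt with ha | ha
  · exact four_lt_repGauge_sum_of_eq_zero hP hPs hu hN ha.symm
  rcases (hmean v hv).eq_or_lt with hb | hb
  · rw [repGauge_rotate]
    exact four_lt_repGauge_sum_of_eq_zero hP hPs hv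
      (fun i hi => repGauge_rotate (u i) _ _ ▸ hN i hi) hb.symm
  rcases (hmean w hw).eq_or_lt with hc | hc
  · rw [repGauge_rotate, repGauge_rotate]
    exact four_lt_repGauge_sum_of_eq_zero hP hPs hw
      (fun i hi => (repGauge_rotate _ _ _).trans (repGauge_rotate _ _ _) ▸ hN i hi) hc.symm
  exact four_lt_repGauge_of_sum_eq hP hPs hu hv hw rfl rfl rfl ha hb hc hN

theorem Representable.exists_of_sum (hP : ∀ i ∈ s, 0 < P i) (hPs : ∑ i ∈ s, P i = 1)
    (hu : ∀ i ∈ s, 0 ≤ u i) (hv : ∀ i ∈ s, 0 ≤ v i) (hw : ∀ i ∈ s, 0 ≤ w i)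
    (h : Representable (∑ i ∈ s, P i * u i) (∑ i ∈ s, P i * v i) (∑ i ∈ s, P i * w i)) :
    ∃ i ∈ s, Representable (u i) (v i) (w i) := by
  by_contra! hN
  refine (four_lt_repGauge_sum hP hPs hu hv hw fun i hi => ?_).not_ge
    (representable_iff.1 h).2.2.2
  exact lt_of_not_ge fun hle => hN i hi (representable_iff.2 ⟨hu i hi, hv i hi, hw i hi, hle⟩)

end Incurved

section Fibers

variable {Ω α : Type*} [Fintype Ω] [DecidableEq α] (w : Ω → ℝ) (X : Ω → α)

/-- `Pr[X = y]`. -/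
def fiberMass (y : α) : ℝ := ∑ ω ∈ univ.filter (fun ω => X ω = y), w ω

/-- `Pr[E | X = y] / Pr[E]`. -/
noncomputable def condRatio (E : Finset Ω) (y : α) : ℝ :=
  (∑ ω ∈ E.filter (fun ω => X ω = y), w ω) / fiberMass w X y / ∑ ω ∈ E, w ω

variable {w}

lemma sum_pos_fiberMass_filter (hw : ∀ ω, 0 ≤ w ω) (E : Finset Ω) :
    ∑ y ∈ (univ.image X).filter (fun y => 0 < fiberMass w X y),
      ∑ ω ∈ E.filter (fun ω => X ω = y), w ω = ∑ ω ∈ E, w ω := by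
  rw [sum_filter_of_ne, sum_fiberwise_of_maps_to fun ω _ => mem_image_of_mem X (mem_univ ω)]
  intro y _ hy
  exact ((sum_nonneg fun ω _ => hw ω).lt_of_ne hy.symm).trans_le
    (sum_le_sum_of_subset_of_nonneg (filter_subset_filter _ (subset_univ E)) fun ω _ _ => hw ω)

lemma sum_fiberMass_mul_condRatio (hw : ∀ ω, 0 ≤ w ω) {E : Finset Ω}
    (hE : 0 < ∑ ω ∈ E, w ω) :
    ∑ y ∈ (univ.image X).filter (fun y => 0 < fiberMass w X y),
      fiberMass w X y * condRatio w X E y = 1 := by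
  rw [sum_congr rfl fun y hy => by
      rw [condRatio, mul_div_assoc', mul_div_cancel₀ _ (mem_filter.1 hy).2.ne'],
    ← sum_div, sum_pos_fiberMass_filter X hw, div_self hE.ne']

lemma condRatio_nonneg (hw : ∀ ω, 0 ≤ w ω) (E : Finset Ω) (y : α) : 0 ≤ condRatio w X E y :=
  div_nonneg (div_nonneg (sum_nonneg fun ω _ => hw ω) (sum_nonneg fun ω _ => hw ω))
    (sum_nonneg fun ω _ => hw ω)

end Fibers

theorem stmt_17 {Ω α : Type*} [Fintype Ω] [DecidableEq α]
    (w : Ω → ℝ) (hw : ∀ ω, 0 ≤ w ω) (hwsum : ∑ ω, w ω = 1)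
    (X : Ω → α) (A B C : Finset Ω)
    (hA : 0 < ∑ ω ∈ A, w ω) (hB : 0 < ∑ ω ∈ B, w ω) (hC : 0 < ∑ ω ∈ C, w ω)
    (a b c : ℝ) (hrep : Representable a b c) :
    ∃ y : α, 0 < ∑ ω ∈ univ.filter (fun ω => X ω = y), w ω ∧
      ∃ a' b' c' : ℝ, Representable a' b' c' ∧
        ((∑ ω ∈ A.filter (fun ω => X ω = y), w ω) /
            (∑ ω ∈ univ.filter (fun ω => X ω = y), w ω)) / (∑ ω ∈ A, w ω) * a ≤ a' ∧
        ((∑ ω ∈ B.filter (fun ω => X ω = y), w ω) /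
            (∑ ω ∈ univ.filter (fun ω => X ω = y), w ω)) / (∑ ω ∈ B, w ω) * b ≤ b' ∧
        ((∑ ω ∈ C.filter (fun ω => X ω = y), w ω) /
            (∑ ω ∈ univ.filter (fun ω => X ω = y), w ω)) / (∑ ω ∈ C, w ω) * c ≤ c' := by
  obtain ⟨ha, hb, hc, -⟩ := representable_iff.1 hrep
  have hmean : ∀ {E : Finset Ω}, 0 < ∑ ω ∈ E, w ω → ∀ t : ℝ,
      ∑ y ∈ (univ.image X).filter (fun y => 0 < fiberMass w X y),
        fiberMass w X y * (condRatio w X E y * t) = t := fun hE t => by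
    simp_rw [← mul_assoc, ← sum_mul, sum_fiberMass_mul_condRatio X hw hE, one_mul]
  have hPs : ∑ y ∈ (univ.image X).filter (fun y => 0 < fiberMass w X y), fiberMass w X y = 1 :=
    (sum_pos_fiberMass_filter X hw univ).trans hwsum
  obtain ⟨y, hy, hrep'⟩ := Representable.exists_of_sum (fun y hy => (mem_filter.1 hy).2) hPs
    (fun y _ => mul_nonneg (condRatio_nonneg X hw A y) ha)
    (fun y _ => mul_nonneg (condRatio_nonneg X hw B y) hb)
    (fun y _ => mul_nonneg (condRatio_nonneg X hw C y) hc)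
    (by rwa [hmean hA, hmean hB, hmean hC])
  exact ⟨y, (mem_filter.1 hy).2, _, _, _, hrep', le_rfl, le_rfl, le_rfl⟩
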